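/- For every ordinal α < ω₁ there exists an ω-sequence T̄ = ⟨T_n : n < ω⟩ of (2,2)-trees such that degsq(T̄) = α. -/

import Mathlib

open FirstOrder Cardinal

namespace Sh522


/-- A `(2,2)`-tree: a set of pairs `(σ, τ)` with `σ, τ ∈ 2^n`, closed under
simultaneous restriction. -/
structure Tree2 : Type where
  mem : ∀ n : ℕ, Set ((Fin n → Bool) × (Fin n → Bool))
  closed : ∀ (n : ℕ) (x : (Fin n → Bool) × (Fin n → Bool)),
    x ∈ mem n → ∀ (m : ℕ) (h : m ≤ n),
      ((fun i => x.1 (Fin.castLE h i)), (fun i => x.2 (Fin.castLE h i))) ∈ mem m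

/-- `lim T = {(η,ν) ∈ 2^ω × 2^ω : ∀ n, (η↾n, ν↾n) ∈ T}`. -/
def lim2 (T : Tree2) : Set ((ℕ → Bool) × (ℕ → Bool)) :=
  {p | ∀ n : ℕ, ((fun i : Fin n => p.1 i), (fun i : Fin n => p.2 i)) ∈ T.mem n}

/-- The domain of the square degree: pairs `(u, g)` with `u ⊆ 2^n` and
`g` a 2-place `ω`-valued function (only its values on `u` matter). -/
def PfAp : Type :=
  Σ n : ℕ, Set (Fin n → Bool) × ((Fin n → Bool) → (Fin n → Bool) → ℕ)

/-- `degsq_{T̄}(u,g) ≥ −1` : `u` is nonempty and `(η,ν) ∈ T_{g(η,ν)}` for `η,ν ∈ u`. -/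
def degsqBase (Tb : ℕ → Tree2) (x : PfAp) : Prop :=
  x.2.1.Nonempty ∧ ∀ η ∈ x.2.1, ∀ ν ∈ x.2.1, (η, ν) ∈ (Tb (x.2.2 η ν)).mem x.1

/-- The successor step for the square degree: `degsq_{T̄}(u,g) ≥ β + 1` where `P`
is `degsq_{T̄}(−) ≥ β`. -/
def degsqStep (P : PfAp → Prop) (x : PfAp) : Prop :=
  x.2.1.Nonempty ∧
  ∀ ρ ∈ x.2.1, ∃ (m : ℕ) (hle : x.1 ≤ m) (u : Set (Fin m → Bool))
      (g : (Fin m → Bool) → (Fin m → Bool) → ℕ)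
      (h : Fin 2 → (Fin x.1 → Bool) → (Fin m → Bool)),
    (∀ (i : Fin 2), ∀ η ∈ x.2.1, ∀ j : Fin x.1, h i η (Fin.castLE hle j) = η j) ∧
    (∀ η ∈ x.2.1, (h 0 η = h 1 η ↔ η ≠ ρ)) ∧
    u = h 0 '' x.2.1 ∪ h 1 '' x.2.1 ∧
    (∀ (i : Fin 2), ∀ η ∈ x.2.1, ∀ ν ∈ x.2.1, g (h i η) (h i ν) = x.2.2 η ν) ∧
    P ⟨m, u, g⟩

/-- `degsqGe T̄ α x` says `degsq_{T̄}(x) ≥ α` (for ordinals `α ≥ 0`). -/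
noncomputable def degsqGe (Tb : ℕ → Tree2) (α : Ordinal.{0}) : PfAp → Prop :=
  Ordinal.limitRecOn (motive := fun _ => PfAp → Prop) α
    (degsqStep (degsqBase Tb))
    (fun _ ih => degsqStep ih)
    (fun o _ ih x => ∀ (β : Ordinal.{0}) (h : β < o), ih β h x)

/-!
Each `T_n` is `S_n × S_n` for a tree `S_n ⊆ 2^{<ω}` with a rank function: a node of rank `v` keeps
rank `v` along exactly one extension of each length, has extensions of every non-limit rank
`c < v`, and ranks are never limits. Then `degsq(u, g) ≥ β` holds iff `g` is constant on `u`, with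
value `n` say, and every member of `u` has rank `≥ β + 1` in `S_n`. The step to `degsq ≥ β + 1`
splits `ρ` into its rank-preserving extension and an extension of rank exactly `β + 1`; limit
stages go through because ranks are never limits. Conversely, a split of `ρ` inside `S_b` yields
two distinct nodes of the same length in `S_b`, and two different trees `S_n` meet only along the
chain `1^k`, which forces `g` to be constant.

The tree `S_n` hangs the tree of descending sequences `d n > d k₁ > d k₂ > ⋯` above the node `1ⁿ0`,
where `d` lists every non-limit ordinal `≤ α` infinitely often; this needs `α` to be countable.
The root of `S_n` has rank `d n ≤ α`, and every `β + 1 ≤ α` occurs as some `d n`.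
-/

open Order Filter

theorem _root_.Fin.append_right_inj {α : Type*} {l j : ℕ} (η : Fin l → α) {e e' : Fin j → α} :
    Fin.append η e = Fin.append η e' ↔ e = e' := by
  refine ⟨fun h => List.ofFn_injective ?_, fun h => h ▸ rfl⟩
  simpa [List.ofFn_fin_append] using congrArg List.ofFn h

theorem _root_.Fin.take_append_self {α : Type*} {l j : ℕ} (η : Fin l → α) (e : Fin j → α) :
    Fin.take l (Nat.le_add_right l j) (Fin.append η e) = η := by
  rw [Fin.take_append_left l le_rfl, Fin.take_eq_self]

theorem _root_.List.ofFn_eq_ofFn_append_drop {α : Type*} {l m : ℕ} (hle : l ≤ m)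
    {τ : Fin m → α} {σ : Fin l → α} (h : ∀ j, τ (Fin.castLE hle j) = σ j) :
    List.ofFn τ = List.ofFn σ ++ (List.ofFn τ).drop l := by
  conv_lhs => rw [← List.take_append_drop l (List.ofFn τ)]
  rw [← Fin.ofFn_take_eq_take_ofFn hle]
  exact congrArg (List.ofFn · ++ _) (funext h)

theorem _root_.Set.Countable.exists_seq_frequently_eq {α : Type*} {S : Set α} (hS : S.Countable)
    (hne : S.Nonempty) : ∃ d : ℕ → α, (∀ a, d a ∈ S) ∧ ∀ c ∈ S, ∃ᶠ a in atTop, d a = c := by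
  obtain ⟨f, hf⟩ := (Set.countable_iff_exists_surjective hne).1 hS
  refine ⟨fun a => f (Nat.unpair a).2, fun a => (f _).2, fun c hc => ?_⟩
  obtain ⟨k, hk⟩ := hf ⟨c, hc⟩
  exact frequently_atTop.2 fun a₀ => ⟨Nat.pair a₀ k, Nat.left_le_pair a₀ k, by simp [hk]⟩

theorem _root_.Ordinal.countable_Iic_of_lt_ord_aleph_one {α : Ordinal.{0}}
    (hα : α < (aleph 1).ord) : (Set.Iic α).Countable := by
  rw [← Set.Iio_insert]
  refine Set.Countable.insert α ?_
  rw [← le_aleph0_iff_set_countable, mk_Iio_ordinal, lift_le_aleph0, ← lt_aleph_one_iff]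
  exact lt_ord.1 hα

theorem degsqGe_zero (Tb : ℕ → Tree2) : degsqGe Tb 0 = degsqStep (degsqBase Tb) :=
  Ordinal.limitRecOn_zero _ _ _

theorem degsqGe_succ (Tb : ℕ → Tree2) (o : Ordinal.{0}) :
    degsqGe Tb (succ o) = degsqStep (degsqGe Tb o) := by
  rw [succ_eq_add_one]
  exact Ordinal.limitRecOn_add_one _ _ _ _

theorem degsqGe_limit (Tb : ℕ → Tree2) {o : Ordinal.{0}} (ho : IsSuccLimit o) (x : PfAp) :
    degsqGe Tb o x ↔ ∀ β < o, degsqGe Tb β x := by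
  unfold degsqGe
  rw [Ordinal.limitRecOn_limit _ _ _ _ ho]

theorem degsqStep_of_append {P : PfAp → Prop} {l : ℕ} {u : Set (Fin l → Bool)}
    {g : (Fin l → Bool) → (Fin l → Bool) → ℕ} (hne : u.Nonempty)
    (H : ∀ ρ ∈ u, ∃ (j : ℕ) (E : Fin 2 → (Fin l → Bool) → Fin j → Bool),
      (∀ η ∈ u, E 0 η = E 1 η ↔ η ≠ ρ) ∧
      P ⟨l + j, (fun η => Fin.append η (E 0 η)) '' u ∪ (fun η => Fin.append η (E 1 η)) '' u,
        fun τ τ' =>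
          g (Fin.take l (Nat.le_add_right l j) τ) (Fin.take l (Nat.le_add_right l j) τ')⟩) :
    degsqStep P ⟨l, u, g⟩ := by
  refine ⟨hne, fun ρ hρ => ?_⟩
  obtain ⟨j, E, hE, hP⟩ := H ρ hρ
  exact ⟨l + j, Nat.le_add_right l j, _, _, fun i η => Fin.append η (E i η),
    fun i η _ k => Fin.append_left η (E i η) k,
    fun η hη => (Fin.append_right_inj η).trans (hE η hη),
    rfl, fun i η _ ν _ => by simp only [Fin.take_append_self], hP⟩

/-- A tree `{w | rank w ≠ ⊥} ⊆ 2^{<ω}` whose `rank` is its splitting rank: for non-limit `c`,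
`rank w ≥ c + 1` iff `w` has two distinct extensions of equal length and rank `≥ c`. -/
structure SplitRankTree where
  rank : List Bool → WithBot Ordinal.{0}
  rank_append_le (w e : List Bool) : rank (w ++ e) ≤ rank w
  exists_rank_append_eq (w : List Bool) (j : ℕ) :
    ∃ e : Fin j → Bool, rank (w ++ List.ofFn e) = rank w
  eq_of_rank_append_eq {w e e' : List Bool} : rank w ≠ ⊥ → e.length = e'.length →
    rank (w ++ e) = rank w → rank (w ++ e') = rank w → e = e'
  exists_rank_append_eq_coe {w : List Bool} {c : Ordinal.{0}} : ¬IsSuccLimit c →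
    (c : WithBot Ordinal) < rank w → ∃ e, rank (w ++ e) = c
  not_isSuccLimit {w : List Bool} {v : Ordinal.{0}} : rank w = v → ¬IsSuccLimit v

namespace SplitRankTree

variable (T : SplitRankTree)

theorem rank_le_rank_nil (w : List Bool) : T.rank w ≤ T.rank [] :=
  T.rank_append_le [] w

theorem rank_ne_bot_of_append {w e : List Bool} (h : T.rank (w ++ e) ≠ ⊥) : T.rank w ≠ ⊥ :=
  ne_bot_of_le_ne_bot h (T.rank_append_le w e)

theorem succ_le_rank_of_split {w e e' : List Bool} (hne : e ≠ e') (hlen : e.length = e'.length)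
    {c : Ordinal.{0}} (he : (c : WithBot Ordinal) ≤ T.rank (w ++ e))
    (he' : (c : WithBot Ordinal) ≤ T.rank (w ++ e')) :
    ((succ c : Ordinal) : WithBot Ordinal) ≤ T.rank w := by
  have hcw : (c : WithBot Ordinal) ≤ T.rank w := he.trans (T.rank_append_le w e)
  obtain ⟨v, hv⟩ := WithBot.ne_bot_iff_exists.1 (ne_bot_of_le_ne_bot WithBot.coe_ne_bot hcw)
  rw [← hv, WithBot.coe_le_coe] at hcw ⊢
  refine succ_le_of_lt (hcw.lt_of_ne fun hcv => hne ?_)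
  subst hcv
  have hrank : ∀ e, (c : WithBot Ordinal) ≤ T.rank (w ++ e) → T.rank (w ++ e) = T.rank w :=
    fun e he => le_antisymm (T.rank_append_le w e) (hv ▸ he)
  exact T.eq_of_rank_append_eq (hv ▸ WithBot.coe_ne_bot) hlen (hrank e he) (hrank e' he')

def toTree2 : Tree2 where
  mem _ := {p | T.rank (List.ofFn p.1) ≠ ⊥ ∧ T.rank (List.ofFn p.2) ≠ ⊥}
  closed l p hp m hm := by
    have hres : ∀ σ : Fin l → Bool, T.rank (List.ofFn σ) ≠ ⊥ →
        T.rank (List.ofFn (Fin.take m hm σ)) ≠ ⊥ := fun σ hσ => by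
      rw [Fin.ofFn_take_eq_take_ofFn]
      exact T.rank_ne_bot_of_append (by rwa [List.take_append_drop])
    exact ⟨hres _ hp.1, hres _ hp.2⟩

end SplitRankTree

def ThinIntersections (F : ℕ → SplitRankTree) : Prop :=
  ∀ ⦃n n' : ℕ⦄ ⦃w w' : List Bool⦄, n ≠ n' → w.length = w'.length →
    (F n).rank w ≠ ⊥ → (F n').rank w ≠ ⊥ → (F n).rank w' ≠ ⊥ → (F n').rank w' ≠ ⊥ → w = w'

section Degree

variable (F : ℕ → SplitRankTree)

def RankGe (c : Ordinal.{0}) (x : PfAp) : Prop :=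
  x.2.1.Nonempty ∧ ∃ n, ∀ η ∈ x.2.1,
    (∀ ν ∈ x.2.1, x.2.2 η ν = n) ∧ (c : WithBot Ordinal) ≤ (F n).rank (List.ofFn η)

def PairRankGe (c : Ordinal.{0}) (x : PfAp) : Prop :=
  ∀ η ∈ x.2.1, ∀ ν ∈ x.2.1, (c : WithBot Ordinal) ≤ (F (x.2.2 η ν)).rank (List.ofFn η) ∧
    (c : WithBot Ordinal) ≤ (F (x.2.2 η ν)).rank (List.ofFn ν)

variable {F}

theorem RankGe.pairRankGe {c : Ordinal.{0}} {x : PfAp} (h : RankGe F c x) : PairRankGe F c x := by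
  obtain ⟨-, n, hn⟩ := h
  intro η hη ν hν
  rw [(hn η hη).1 ν hν]
  exact ⟨(hn η hη).2, (hn ν hν).2⟩

theorem RankGe.mono {c c' : Ordinal.{0}} (hc : c' ≤ c) {x : PfAp} (h : RankGe F c x) :
    RankGe F c' x := by
  obtain ⟨hne, n, hn⟩ := h
  exact ⟨hne, n, fun η hη => ⟨(hn η hη).1, (WithBot.coe_le_coe.2 hc).trans (hn η hη).2⟩⟩

theorem degsqBase_iff {x : PfAp} :
    degsqBase (fun n => (F n).toTree2) x ↔ x.2.1.Nonempty ∧ PairRankGe F 0 x := by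
  have hzero : ∀ v : WithBot Ordinal.{0}, ((0 : Ordinal) : WithBot Ordinal) ≤ v ↔ v ≠ ⊥ := by
    intro v; cases v <;> simp
  simp only [degsqBase, PairRankGe, hzero]
  rfl

theorem degsqStep_of_rankGe {c : Ordinal.{0}} (hc : ¬IsSuccLimit c) {P : PfAp → Prop}
    (hP : ∀ y, RankGe F c y → P y) {x : PfAp} (hx : RankGe F (succ c) x) : degsqStep P x := by
  obtain ⟨l, u, g⟩ := x
  obtain ⟨hne, n, hn⟩ := hx
  refine degsqStep_of_append hne fun ρ hρ => ?_
  have hlt : (c : WithBot Ordinal) < (F n).rank (List.ofFn ρ) :=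
    (WithBot.coe_lt_coe.2 (lt_succ c)).trans_le (hn ρ hρ).2
  obtain ⟨e, he⟩ := (F n).exists_rank_append_eq_coe hc hlt
  choose pad hpad using fun η : Fin l → Bool => (F n).exists_rank_append_eq (List.ofFn η) e.length
  classical
  let E : Fin 2 → (Fin l → Bool) → Fin e.length → Bool := ![pad, Function.update pad ρ e.get]
  have hpadρ : pad ρ ≠ e.get := fun h => by
    have hρρ := hpad ρ
    rw [h, List.ofFn_get, he] at hρρ
    exact hlt.ne hρρ
  have hrank : ∀ i, ∀ η ∈ u,
      (c : WithBot Ordinal) ≤ (F n).rank (List.ofFn η ++ List.ofFn (E i η)) := by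
    intro i η hη
    have hηc := (WithBot.coe_le_coe.2 (le_succ c)).trans (hn η hη).2
    fin_cases i
    · simpa [E, hpad] using hηc
    · by_cases hηρ : η = ρ
      · subst hηρ
        simp [E, List.ofFn_get, he]
      · simpa [E, hηρ, hpad] using hηc
  have hcolor : ∀ i i', ∀ η ∈ u, ∀ ν ∈ u, g (Fin.take l (Nat.le_add_right l _)
      (Fin.append η (E i η))) (Fin.take l (Nat.le_add_right l _) (Fin.append ν (E i' ν))) = n := by
    intro i i' η hη ν hν
    simp only [Fin.take_append_self]
    exact (hn η hη).1 ν hν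
  refine ⟨e.length, E, fun η _ => ?_, hP _ ⟨⟨_, Or.inl ⟨ρ, hρ, rfl⟩⟩, n, ?_⟩⟩
  · by_cases hηρ : η = ρ
    · simp [E, hηρ, hpadρ]
    · simp [E, hηρ]
  · rintro _ (⟨η, hη, rfl⟩ | ⟨η, hη, rfl⟩) <;>
      refine ⟨?_, by simpa [List.ofFn_fin_append] using hrank _ η hη⟩ <;>
      rintro _ (⟨ν, hν, rfl⟩ | ⟨ν, hν, rfl⟩) <;> exact hcolor _ _ η hη ν hν

/-- If `σ` splits inside `F b`, its two extensions are distinct nodes of `F b` and `F (g σ σ)` of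
the same length, so `b = g σ σ`. -/
theorem ThinIntersections.eq_color_and_succ_le_rank_of_degsqStep (hF : ThinIntersections F)
    {c : Ordinal.{0}} {P : PfAp → Prop} (hP : ∀ y, P y → PairRankGe F c y) {l : ℕ}
    {u : Set (Fin l → Bool)} {g : (Fin l → Bool) → (Fin l → Bool) → ℕ}
    (hx : degsqStep P ⟨l, u, g⟩) {σ : Fin l → Bool} (hσ : σ ∈ u) : (∀ ν ∈ u, g σ ν = g σ σ ∧ g ν σ = g σ σ) ∧
      ((succ c : Ordinal) : WithBot Ordinal) ≤ (F (g σ σ)).rank (List.ofFn σ) := by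
  obtain ⟨m, hle, _, g', h, hres, hsplit, rfl, hg', hPy⟩ := hx.2 σ hσ
  have hrank : ∀ i, ∀ η ∈ u, ∀ ν ∈ u,
      (c : WithBot Ordinal) ≤ (F (g η ν)).rank (List.ofFn (h i η)) ∧
        (c : WithBot Ordinal) ≤ (F (g η ν)).rank (List.ofFn (h i ν)) := by
    intro i η hη ν hν
    have hmem : ∀ ξ ∈ u, h i ξ ∈ h 0 '' u ∪ h 1 '' u := fun ξ hξ => by
      fin_cases i
      exacts [Or.inl ⟨ξ, hξ, rfl⟩, Or.inr ⟨ξ, hξ, rfl⟩]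
    simpa only [hg' i η hη ν hν] using hP _ hPy (h i η) (hmem η hη) (h i ν) (hmem ν hν)
  have hne : h 0 σ ≠ h 1 σ := fun heq => (hsplit σ hσ).1 heq rfl
  have htree : ∀ b, (∀ i, (c : WithBot Ordinal) ≤ (F b).rank (List.ofFn (h i σ))) → b = g σ σ := by
    intro b hb
    by_contra hbσ
    have hne_bot : ∀ {v : WithBot Ordinal}, (c : WithBot Ordinal) ≤ v → v ≠ ⊥ :=
      ne_bot_of_le_ne_bot WithBot.coe_ne_bot
    exact hne (List.ofFn_injective (hF hbσ (by simp) (hne_bot (hb 0))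
      (hne_bot (hrank 0 σ hσ σ hσ).1) (hne_bot (hb 1)) (hne_bot (hrank 1 σ hσ σ hσ).1)))
  refine ⟨fun ν hν => ⟨htree _ fun i => (hrank i σ hσ ν hν).1,
    htree _ fun i => (hrank i ν hν σ hσ).2⟩, ?_⟩
  have hext : ∀ i, List.ofFn (h i σ) = List.ofFn σ ++ (List.ofFn (h i σ)).drop l :=
    fun i => List.ofFn_eq_ofFn_append_drop hle (hres i σ hσ)
  have h₀ := (hrank 0 σ hσ σ hσ).1
  have h₁ := (hrank 1 σ hσ σ hσ).1
  rw [hext] at h₀ h₁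
  refine (F _).succ_le_rank_of_split (fun heq => hne (List.ofFn_injective ?_)) (by simp) h₀ h₁
  rw [hext 0, hext 1, heq]

theorem ThinIntersections.rankGe_of_degsqStep (hF : ThinIntersections F) {c : Ordinal.{0}}
    {P : PfAp → Prop} (hP : ∀ y, P y → PairRankGe F c y) {x : PfAp} (hx : degsqStep P x) :
    RankGe F (succ c) x := by
  obtain ⟨l, u, g⟩ := x
  have key := fun σ (hσ : σ ∈ u) => hF.eq_color_and_succ_le_rank_of_degsqStep hP hx hσ
  obtain ⟨σ₀, hσ₀⟩ := hx.1
  have hdiag : ∀ η ∈ u, g η η = g σ₀ σ₀ := fun η hη =>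
    ((key η hη).1 σ₀ hσ₀).1.symm.trans ((key σ₀ hσ₀).1 η hη).2
  refine ⟨⟨σ₀, hσ₀⟩, g σ₀ σ₀, fun η hη => ⟨fun ν hν => ?_, hdiag η hη ▸ (key η hη).2⟩⟩
  exact ((key η hη).1 ν hν).1.trans (hdiag η hη)

theorem rankGe_succ_of_isSuccLimit {o : Ordinal.{0}} (ho : IsSuccLimit o) {x : PfAp}
    (h : ∀ β < o, RankGe F (succ β) x) : RankGe F (succ o) x := by
  obtain ⟨⟨σ₀, hσ₀⟩, n, hn⟩ := h 0 ho.bot_lt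
  refine ⟨⟨σ₀, hσ₀⟩, n, fun η hη => ⟨(hn η hη).1, ?_⟩⟩
  have hβ : ∀ β < o, ((succ β : Ordinal) : WithBot Ordinal) ≤ (F n).rank (List.ofFn η) := by
    intro β hβ
    obtain ⟨-, n', hn'⟩ := h β hβ
    obtain rfl : n' = n := ((hn' σ₀ hσ₀).1 σ₀ hσ₀).symm.trans ((hn σ₀ hσ₀).1 σ₀ hσ₀)
    exact (hn' η hη).2
  obtain ⟨v, hv⟩ := WithBot.ne_bot_iff_exists.1
    (ne_bot_of_le_ne_bot WithBot.coe_ne_bot (hn η hη).2)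
  simp only [← hv, WithBot.coe_le_coe, succ_le_iff] at hβ ⊢
  have hov : o ≤ v := not_lt.1 fun hvo => (hβ v hvo).false
  exact hov.lt_of_ne fun heq => (F n).not_isSuccLimit hv.symm (heq ▸ ho)

theorem ThinIntersections.degsqGe_iff_rankGe (hF : ThinIntersections F) (β : Ordinal.{0})
    (x : PfAp) : degsqGe (fun n => (F n).toTree2) β x ↔ RankGe F (succ β) x := by
  induction β using Ordinal.limitRecOn generalizing x with
  | zero =>
    rw [degsqGe_zero]
    exact ⟨hF.rankGe_of_degsqStep fun y hy => (degsqBase_iff.1 hy).2,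
      degsqStep_of_rankGe not_isSuccLimit_bot fun y hy => degsqBase_iff.2 ⟨hy.1, hy.pairRankGe⟩⟩
  | add_one o ih =>
    rw [← succ_eq_add_one, degsqGe_succ]
    exact ⟨hF.rankGe_of_degsqStep fun y hy => ((ih y).1 hy).pairRankGe,
      degsqStep_of_rankGe (not_isSuccLimit_succ o) fun y hy => (ih y).2 hy⟩
  | limit o ho ih =>
    rw [degsqGe_limit _ ho]
    exact ⟨fun h => rankGe_succ_of_isSuccLimit ho fun β hβ => (ih β hβ x).1 (h β hβ),
      fun h β hβ => (ih β hβ x).2 (h.mono (succ_le_succ hβ.le))⟩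

end Degree

namespace SplitRankTree

variable (T : SplitRankTree)

def consRank (b : Bool) (r : List Bool → WithBot Ordinal.{0}) : List Bool → WithBot Ordinal.{0}
  | [] => r []
  | b' :: w => if b' = b then r w else ⊥

theorem consRank_append_le (b : Bool) :
    ∀ w e, consRank b T.rank (w ++ e) ≤ consRank b T.rank w
  | [], [] => le_rfl
  | [], b' :: e => by
    by_cases hb : b' = b <;> simp [consRank, hb, T.rank_le_rank_nil]
  | b' :: w, e => by
    by_cases hb : b' = b <;> simp [consRank, hb, T.rank_append_le]

theorem consRank_exists_append_eq (b : Bool) :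
    ∀ w j, ∃ e : Fin j → Bool, consRank b T.rank (w ++ List.ofFn e) = consRank b T.rank w
  | [], 0 => ⟨Fin.elim0, rfl⟩
  | [], j + 1 => by
    obtain ⟨e, he⟩ := T.exists_rank_append_eq [] j
    exact ⟨Fin.cons b e, by simpa [consRank] using he⟩
  | b' :: w, j => by
    by_cases hb : b' = b
    · obtain ⟨e, he⟩ := T.exists_rank_append_eq w j
      exact ⟨e, by simpa [consRank, hb] using he⟩
    · exact ⟨fun _ => false, by simp [consRank, hb]⟩

theorem consRank_eq_of_append_eq (b : Bool) {w e e' : List Bool} (hw : consRank b T.rank w ≠ ⊥)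
    (hlen : e.length = e'.length) (he : consRank b T.rank (w ++ e) = consRank b T.rank w)
    (he' : consRank b T.rank (w ++ e') = consRank b T.rank w) : e = e' := by
  cases w with
  | nil =>
    have hhead : ∀ {b₀ e₀}, consRank b T.rank (b₀ :: e₀) = T.rank [] →
        b₀ = b ∧ T.rank ([] ++ e₀) = T.rank [] := fun {b₀ e₀} h => by
      by_cases hb : b₀ = b
      · simpa [consRank, hb] using h
      · simp only [consRank, hb, if_false] at h
        exact absurd h.symm hw
    match e, e', hlen with
    | [], [], _ => rfl
    | b₁ :: e, b₂ :: e', hlen =>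
      obtain ⟨rfl, h₁⟩ := hhead he
      obtain ⟨rfl, h₂⟩ := hhead he'
      exact congrArg _ (T.eq_of_rank_append_eq hw (Nat.succ_inj.1 hlen) h₁ h₂)
  | cons b' w =>
    by_cases hb : b' = b <;> simp only [consRank, List.cons_append, hb, if_true] at hw he he'
    · exact T.eq_of_rank_append_eq hw hlen he he'
    · simp at hw

theorem consRank_exists_append_eq_coe (b : Bool) {w : List Bool} {c : Ordinal.{0}}
    (hc : ¬IsSuccLimit c) (h : (c : WithBot Ordinal) < consRank b T.rank w) :
    ∃ e, consRank b T.rank (w ++ e) = c := by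
  cases w with
  | nil =>
    obtain ⟨e, he⟩ := T.exists_rank_append_eq_coe (w := []) hc h
    exact ⟨b :: e, by simpa [consRank] using he⟩
  | cons b' w =>
    by_cases hb : b' = b <;> simp only [consRank, hb, if_true, if_false] at h
    · obtain ⟨e, he⟩ := T.exists_rank_append_eq_coe hc h
      exact ⟨e, by simpa [consRank, hb] using he⟩
    · exact absurd h not_lt_bot

theorem consRank_not_isSuccLimit (b : Bool) {w : List Bool} {v : Ordinal.{0}}
    (h : consRank b T.rank w = v) : ¬IsSuccLimit v := by
  cases w with
  | nil => exact T.not_isSuccLimit h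
  | cons b' w =>
    by_cases hb : b' = b <;> simp only [consRank, hb, if_true, if_false] at h
    · exact T.not_isSuccLimit h
    · simp at h

def cons (b : Bool) : SplitRankTree where
  rank := consRank b T.rank
  rank_append_le := T.consRank_append_le b
  exists_rank_append_eq := T.consRank_exists_append_eq b
  eq_of_rank_append_eq := T.consRank_eq_of_append_eq b
  exists_rank_append_eq_coe := T.consRank_exists_append_eq_coe b
  not_isSuccLimit := T.consRank_not_isSuccLimit b

@[simp]
theorem cons_rank_nil (b : Bool) : (T.cons b).rank [] = T.rank [] := rfl

@[simp]
theorem cons_rank_cons (b b' : Bool) (w : List Bool) :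
    (T.cons b).rank (b' :: w) = if b' = b then T.rank w else ⊥ := rfl

/-- The tree `T` placed above the node `1ⁿ0`. -/
def spine : ℕ → SplitRankTree
  | 0 => T.cons false
  | n + 1 => (spine n).cons true

@[simp]
theorem spine_rank_nil (n : ℕ) : (T.spine n).rank [] = T.rank [] := by
  induction n <;> simp [spine, *]

theorem eq_replicate_of_spine_rank_ne_bot (T' : SplitRankTree) :
    ∀ {n n' : ℕ} {w : List Bool}, n ≠ n' → (T.spine n).rank w ≠ ⊥ →
      (T'.spine n').rank w ≠ ⊥ → w = List.replicate w.length true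
  | _, _, [], _, _, _ => rfl
  | 0, 0, _ :: _, hn, _, _ => absurd rfl hn
  | 0, _ + 1, b :: _, _, h, h' => by cases b <;> simp [spine] at h h'
  | _ + 1, 0, b :: _, _, h, h' => by cases b <;> simp [spine] at h h'
  | n + 1, n' + 1, b :: w, hn, h, h' => by
    cases b <;> simp only [spine, cons_rank_cons, if_true, reduceCtorEq, if_false] at h h'
    · exact absurd rfl h
    · exact congrArg (true :: ·) (eq_replicate_of_spine_rank_ne_bot T' (by omega) h h')

end SplitRankTree

theorem thinIntersections_spine (T : ℕ → SplitRankTree) :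
    ThinIntersections fun n => (T n).spine n := by
  intro n n' w w' hn hlen h₁ h₁' h₂ h₂'
  rw [(T n).eq_replicate_of_spine_rank_ne_bot (T n') hn h₁ h₁',
    (T n).eq_replicate_of_spine_rank_ne_bot (T n') hn h₂ h₂', hlen]

section Descending

variable (d : ℕ → Ordinal.{0})

/-- `descendingRank d v 0` ranks the tree of words `0^{k₁} 1 ⋯ 0^{kᵢ} 1 0^k` with
`v > d k₁ > ⋯ > d kᵢ`, giving such a word the rank `d kᵢ` (or `v` when `i = 0`); the argument `k`
counts the zeros read since the last `1`. -/
noncomputable def descendingRank : Ordinal.{0} → ℕ → List Bool → WithBot Ordinal.{0}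
  | v, _, [] => v
  | v, k, false :: w => descendingRank v (k + 1) w
  | v, k, true :: w => if d k < v then descendingRank (d k) 0 w else ⊥

theorem descendingRank_replicate_append (v : Ordinal.{0}) (k j : ℕ) (w : List Bool) :
    descendingRank d v k (List.replicate j false ++ w) = descendingRank d v (k + j) w := by
  induction j generalizing k with
  | zero => rfl
  | succ j ih => simp only [List.replicate_succ, List.cons_append, descendingRank, ih]; ring_nf

@[simp]
theorem descendingRank_nil (v : Ordinal.{0}) (k : ℕ) : descendingRank d v k [] = v := rfl

theorem descendingRank_le (v : Ordinal.{0}) (k : ℕ) (w : List Bool) :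
    descendingRank d v k w ≤ v := by
  induction w generalizing v k with
  | nil => exact le_rfl
  | cons b w ih =>
    cases b
    · exact ih v (k + 1)
    · simp only [descendingRank]
      split_ifs with h
      · exact (ih _ _).trans (WithBot.coe_le_coe.2 h.le)
      · exact bot_le

theorem descendingRank_append_le (v : Ordinal.{0}) (k : ℕ) (w e : List Bool) :
    descendingRank d v k (w ++ e) ≤ descendingRank d v k w := by
  induction w generalizing v k with
  | nil => exact descendingRank_le d v k e
  | cons b w ih =>
    cases b
    · exact ih v (k + 1)
    · simp only [List.cons_append, descendingRank]
      split_ifs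
      · exact ih _ _
      · exact le_rfl

theorem descendingRank_append_replicate (v : Ordinal.{0}) (k : ℕ) (w : List Bool) (j : ℕ) :
    descendingRank d v k (w ++ List.replicate j false) = descendingRank d v k w := by
  induction w generalizing v k with
  | nil => simpa using descendingRank_replicate_append d v k j []
  | cons b w ih =>
    cases b
    · exact ih v (k + 1)
    · simp only [List.cons_append, descendingRank, ih]

theorem eq_replicate_of_descendingRank_eq {v : Ordinal.{0}} {k : ℕ} {e : List Bool}
    (h : descendingRank d v k e = v) : e = List.replicate e.length false := by
  induction e generalizing k with
  | nil => rfl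
  | cons b e ih =>
    cases b
    · exact congrArg (false :: ·) (ih h)
    · simp only [descendingRank] at h
      split_ifs at h with hk
      · exact absurd (h ▸ descendingRank_le d _ 0 e) (by simpa using hk)
      · simp at h

theorem eq_replicate_of_descendingRank_append_eq {v : Ordinal.{0}} {k : ℕ} {w e : List Bool}
    (h : descendingRank d v k (w ++ e) = descendingRank d v k w) (hw : descendingRank d v k w ≠ ⊥) :
    e = List.replicate e.length false := by
  induction w generalizing v k with
  | nil => exact eq_replicate_of_descendingRank_eq d h
  | cons b w ih =>
    cases b
    · exact ih h hw
    · simp only [List.cons_append, descendingRank] at h hw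
      split_ifs at h hw
      · exact ih h hw
      · exact absurd rfl hw

theorem exists_descendingRank_append_eq {v c : Ordinal.{0}} {k : ℕ} {w : List Bool}
    (hc : ∃ᶠ a in atTop, d a = c) (h : (c : WithBot Ordinal) < descendingRank d v k w) :
    ∃ e, descendingRank d v k (w ++ e) = c := by
  induction w generalizing v k with
  | nil =>
    obtain ⟨a, hka, rfl⟩ := frequently_atTop.1 hc k
    refine ⟨List.replicate (a - k) false ++ [true], ?_⟩
    rw [List.nil_append, descendingRank_replicate_append, Nat.add_sub_cancel' hka]
    simp [descendingRank, WithBot.coe_lt_coe.1 h]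
  | cons b w ih =>
    cases b
    · exact ih h
    · simp only [descendingRank] at h
      split_ifs at h
      · obtain ⟨e, he⟩ := ih h
        exact ⟨e, by simp [descendingRank, *]⟩
      · exact absurd h not_lt_bot

theorem descendingRank_eq_coe {v v' : Ordinal.{0}} {k : ℕ} {w : List Bool}
    (h : descendingRank d v k w = v') : v' = v ∨ ∃ a, d a = v' := by
  induction w generalizing v k with
  | nil => exact Or.inl (WithBot.coe_inj.1 h).symm
  | cons b w ih =>
    cases b
    · exact ih h
    · simp only [descendingRank] at h
      split_ifs at h
      · exact (ih h).elim (fun h' => Or.inr ⟨k, h'.symm⟩) Or.inr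
      · simp at h

noncomputable def descendingTree (v : Ordinal.{0}) (hv : ¬IsSuccLimit v)
    (hd : ∀ a, ¬IsSuccLimit (d a))
    (hinf : ∀ c, ¬IsSuccLimit c → c < v → ∃ᶠ a in atTop, d a = c) : SplitRankTree where
  rank := descendingRank d v 0
  rank_append_le := descendingRank_append_le d v 0
  exists_rank_append_eq w j :=
    ⟨fun _ => false, by rw [List.ofFn_const, descendingRank_append_replicate]⟩
  eq_of_rank_append_eq hw hlen he he' := by
    rw [eq_replicate_of_descendingRank_append_eq d he hw,
      eq_replicate_of_descendingRank_append_eq d he' hw, hlen]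
  exists_rank_append_eq_coe {w c} hc h := exists_descendingRank_append_eq d
    (hinf c hc (WithBot.coe_lt_coe.1 (h.trans_le (descendingRank_le d v 0 w)))) h
  not_isSuccLimit h := (descendingRank_eq_coe d h).elim (· ▸ hv) fun ⟨a, ha⟩ => ha ▸ hd a

@[simp]
theorem descendingTree_rank_nil (v : Ordinal.{0}) (hv hd hinf) :
    (descendingTree d v hv hd hinf).rank [] = v := rfl

end Descending

/-- for every `α < ω₁` there is an ω-sequence `T̄` of (2,2)-trees
with `degsq(T̄) = α`, i.e. no pair has degree `≥ α` while for each `β < α` some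
pair has degree `≥ β`. -/
theorem stmt_14 (α : Ordinal.{0}) (hα : α < (Cardinal.aleph 1).ord) :
    ∃ T : ℕ → Tree2,
      (∀ x : PfAp, ¬ degsqGe T α x) ∧
      (∀ β < α, ∃ x : PfAp, degsqGe T β x) := by
  have hS : {c : Ordinal.{0} | c ≤ α ∧ ¬IsSuccLimit c}.Countable :=
    (Ordinal.countable_Iic_of_lt_ord_aleph_one hα).mono fun _ hc => hc.1
  obtain ⟨d, hdS, hd⟩ := hS.exists_seq_frequently_eq ⟨0, bot_le, not_isSuccLimit_bot⟩
  let C : ℕ → SplitRankTree := fun n => descendingTree d (d n) (hdS n).2 (fun a => (hdS a).2)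
    fun c hc hcn => hd c ⟨hcn.le.trans (hdS n).1, hc⟩
  have hF : ThinIntersections fun n => (C n).spine n := thinIntersections_spine C
  refine ⟨fun n => ((C n).spine n).toTree2, fun x hx => ?_, fun β hβ => ?_⟩
  · obtain ⟨⟨σ, hσ⟩, n, hn⟩ := (hF.degsqGe_iff_rankGe α x).1 hx
    have hle := (hn σ hσ).2.trans (((C n).spine n).rank_le_rank_nil _)
    simp only [C, SplitRankTree.spine_rank_nil, descendingTree_rank_nil, WithBot.coe_le_coe,
      succ_le_iff] at hle
    exact (hdS n).1.not_gt hle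
  · obtain ⟨n, hn⟩ := (hd (succ β) ⟨succ_le_of_lt hβ, not_isSuccLimit_succ β⟩).exists
    refine ⟨⟨0, {Fin.elim0}, fun _ _ => n⟩, (hF.degsqGe_iff_rankGe β _).2 ⟨⟨_, rfl⟩, n, ?_⟩⟩
    rintro η rfl
    exact ⟨fun _ _ => rfl, by simp [C, hn]⟩

end Sh522
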